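/- For n ≥ 4, the number of equivalence classes {I, Iᶜ} of subsets I ⊆ ZMod n with 2 ≤ |I| ≤ n-2 such that the induced subgraph of the cycle graph on I has at least 2 connected components equals 2^{n-1} - n(n-1)/2 - 1. -/

import Mathlib

/-!
A subset of the `n`-cycle induces a connected subgraph exactly when it is an arc
`{a, a + 1, …, a + k - 1}`: for `x ∈ I` with `x - 1 ∉ I`, the maximal run `x, x + 1, …`
inside `I` is closed under adjacency in `I`, so it is all of `I` when `I` is connected.
Hence the sets counted are the non-arcs of size `2 ≤ k ≤ n - 2`. There are `2 ^ n - 2n - 2`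
sets of these sizes, and `n (n - 3)` of them are arcs, each determined by its first point and
its length. Non-arcs are closed under complement and `I ≠ Iᶜ`, so every class `{I, Iᶜ}` is
counted twice, which gives `(2 ^ n - 2 - n (n - 1)) / 2`.
-/

/-- The cycle graph on `ZMod n`: `i` and `j` are adjacent iff `j = i + 1` or `i = j + 1`. -/
def cycleGraph (n : ℕ) : SimpleGraph (ZMod n) :=
  SimpleGraph.fromRel (fun i j => j = i + 1)

theorem Set.two_mul_ncard_image_pair_compl {α : Type*} [Finite α] [Nonempty α]
    {S : Set (Set α)} (hS : ∀ I ∈ S, Iᶜ ∈ S) :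
    2 * ((fun I => ({I, Iᶜ} : Set (Set α))) '' S).ncard = S.ncard := by
  obtain ⟨a⟩ := ‹Nonempty α›
  -- each class `{I, Iᶜ}` has exactly one member containing `a`
  set S₀ := {I ∈ S | a ∈ I}
  have himage : (fun I => ({I, Iᶜ} : Set (Set α))) '' S = (fun I => {I, Iᶜ}) '' S₀ := by
    refine subset_antisymm ?_ (Set.image_mono fun I hI => hI.1)
    rintro _ ⟨I, hI, rfl⟩
    by_cases ha : a ∈ I
    · exact ⟨I, ⟨hI, ha⟩, rfl⟩
    · exact ⟨Iᶜ, ⟨hS I hI, ha⟩, by simp only [compl_compl, Set.pair_comm]⟩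
  have hinj : S₀.InjOn (fun I => ({I, Iᶜ} : Set (Set α))) := by
    rintro I ⟨-, hI⟩ J ⟨-, hJ⟩ h
    have hJ' : J ∈ ({I, Iᶜ} : Set (Set α)) := (congrArg (J ∈ ·) h).mpr (Set.mem_insert J _)
    obtain rfl | rfl := hJ'
    · rfl
    · exact absurd hI hJ
  have hsplit : S = S₀ ∪ compl '' S₀ := by
    refine subset_antisymm (fun I hI => ?_) (Set.union_subset (fun I hI => hI.1) ?_)
    · by_cases ha : a ∈ I
      · exact Or.inl ⟨hI, ha⟩
      · exact Or.inr ⟨Iᶜ, ⟨hS I hI, ha⟩, compl_compl I⟩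
    · rintro _ ⟨I, hI, rfl⟩
      exact hS I hI.1
  have hdisj : Disjoint S₀ (compl '' S₀) := by
    refine Set.disjoint_left.mpr fun I hI ⟨J, hJ, hJI⟩ => ?_
    exact (hJI ▸ hI.2 : a ∈ Jᶜ) hJ.2
  rw [himage, hinj.ncard_image, hsplit, Set.ncard_union_eq hdisj,
    Set.ncard_image_of_injective _ compl_injective, two_mul]

theorem Set.ncard_setOf_ncard_mem {α : Type*} [Fintype α] (K : Finset ℕ) :
    {I : Set α | I.ncard ∈ K}.ncard = ∑ k ∈ K, (Fintype.card α).choose k := by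
  classical
  have hcoe : {I : Set α | I.ncard ∈ K} =
      (↑) '' (↑(Finset.univ.filter fun s : Finset α => s.card ∈ K) : Set (Finset α)) := by
    ext I
    simp only [Set.mem_ofPred_eq, Set.mem_image, Finset.coe_filter, Finset.mem_univ, true_and]
    refine ⟨fun h => ⟨I.toFinset, ?_, I.coe_toFinset⟩, ?_⟩
    · rwa [← Set.ncard_eq_toFinset_card']
    · rintro ⟨s, hs, rfl⟩
      rwa [Set.ncard_coe_finset]
  rw [hcoe, Set.ncard_image_of_injective _ Finset.coe_injective, Set.ncard_coe_finset,
    Finset.card_eq_sum_card_fiberwise (f := Finset.card) (t := K)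
      (s := Finset.univ.filter fun s : Finset α => s.card ∈ K) fun s hs => by simpa using hs]
  refine Finset.sum_congr rfl fun k hk => ?_
  rw [Finset.filter_filter, ← Finset.card_univ, ← Finset.card_powersetCard,
    Finset.powersetCard_eq_filter, Finset.powerset_univ]
  congr 1
  ext s
  simp only [Finset.mem_filter, Finset.mem_univ, true_and]
  exact ⟨And.right, fun h => ⟨h ▸ hk, h⟩⟩

theorem Nat.sum_Icc_choose_eq (n : ℕ) :
    ∑ k ∈ Finset.Icc 2 (n - 2), n.choose k = 2 ^ n - 2 * n - 2 := by
  obtain hn | ⟨m, rfl⟩ : n < 3 ∨ ∃ m, n = m + 3 := by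
    rcases lt_or_ge n 3 with h | h
    · exact Or.inl h
    · exact Or.inr ⟨n - 3, by omega⟩
  · interval_cases n <;> rfl
  have h := Nat.sum_range_choose (m + 3)
  rw [Finset.range_eq_Ico,
    ← Finset.sum_Ico_consecutive (m := 0) (n := 2) _ (by omega) (by omega),
    ← Finset.sum_Ico_consecutive (m := 2) (n := m + 2) _ (by omega) (by omega)] at h
  have hlow : ∑ k ∈ Finset.Ico 0 2, (m + 3).choose k = 1 + (m + 3) := by
    simp [Finset.sum_range_succ]
  have hhigh : ∑ k ∈ Finset.Ico (m + 2) (m + 3 + 1), (m + 3).choose k = m + 4 := by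
    simp [Finset.sum_Ico_succ_top, Nat.choose_succ_self_right]
  rw [← Finset.Ico_add_one_right_eq_Icc, show m + 3 - 2 + 1 = m + 2 by omega]
  omega

theorem SimpleGraph.preconnected_iff_subsingleton_connectedComponent {V : Type*}
    {G : SimpleGraph V} : G.Preconnected ↔ Subsingleton G.ConnectedComponent :=
  ⟨Preconnected.subsingleton_connectedComponent, fun _ u v => ConnectedComponent.eq.mp <|
    Subsingleton.elim (G.connectedComponentMk u) (G.connectedComponentMk v)⟩

theorem SimpleGraph.Reachable.mem_of_forall_adj_mem {V : Type*} {G : SimpleGraph V} {s : Set V}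
    (hs : ∀ ⦃u v⦄, G.Adj u v → u ∈ s → v ∈ s) {u v : V} (huv : G.Reachable u v)
    (hu : u ∈ s) : v ∈ s := by
  have h := (reachable_iff_reflTransGen u v).mp huv
  clear huv
  induction h with
  | refl => exact hu
  | tail _ hadj ih => exact hs hadj ih

namespace ZMod

variable {n : ℕ} {a b v : ZMod n} {k l : ℕ}

def arc (a : ZMod n) (k : ℕ) : Set (ZMod n) := (fun i : ℕ => a + i) '' Set.Iio k

@[simp]
theorem arc_zero (a : ZMod n) : arc a 0 = ∅ := by simp [arc]

def IsArc (I : Set (ZMod n)) : Prop := ∃ a k, I = arc a k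

theorem natCast_injOn_Iio : Set.InjOn (Nat.cast : ℕ → ZMod n) (Set.Iio n) :=
  fun i hi j hj h => by rwa [natCast_eq_natCast_iff', Nat.mod_eq_of_lt hi, Nat.mod_eq_of_lt hj] at h

theorem ncard_arc_of_le (a : ZMod n) (hk : k ≤ n) : (arc a k).ncard = k := by
  rw [arc, Set.InjOn.ncard_image, Set.ncard_Iio_nat]
  exact fun i hi j hj h =>
    natCast_injOn_Iio (lt_of_lt_of_le hi hk) (lt_of_lt_of_le hj hk) (add_left_cancel h)

theorem arc_eq_univ [NeZero n] (a : ZMod n) (hk : n ≤ k) : arc a k = Set.univ :=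
  Set.eq_univ_of_forall fun x =>
    ⟨(x - a).val, (val_lt _).trans_le hk, show a + ((x - a).val : ZMod n) = x by
      rw [natCast_zmod_val, add_sub_cancel]⟩

theorem ncard_arc [NeZero n] (a : ZMod n) (k : ℕ) : (arc a k).ncard = min k n := by
  rcases le_total k n with hk | hk
  · rw [ncard_arc_of_le a hk, min_eq_left hk]
  · rw [arc_eq_univ a hk, Set.ncard_univ, Nat.card_zmod, min_eq_right hk]

theorem add_one_mem_arc_or_eq (hv : v ∈ arc a k) : v + 1 ∈ arc a k ∨ v + 1 = a + k := by
  obtain ⟨i, hi, rfl⟩ := hv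
  rcases (Nat.succ_le_of_lt hi).lt_or_eq with h | h
  · exact Or.inl ⟨i + 1, h, by push_cast; ring⟩
  · exact Or.inr (by rw [← h]; push_cast; ring)

theorem sub_one_mem_arc_or_eq (hv : v ∈ arc a k) : v - 1 ∈ arc a k ∨ v = a := by
  obtain ⟨i, hi, rfl⟩ := hv
  cases i with
  | zero => exact Or.inr (by simp)
  | succ i => exact Or.inl ⟨i, by simp only [Set.mem_Iio] at hi ⊢; omega, by push_cast; ring⟩

theorem sub_one_notMem_arc (a : ZMod n) (hk : k < n) : a - 1 ∉ arc a k := by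
  rintro ⟨i, hi, h⟩
  have hzero : ((i + 1 : ℕ) : ZMod n) = 0 := by push_cast; linear_combination h
  have := Nat.le_of_dvd i.succ_pos ((natCast_eq_zero_iff _ _).mp hzero)
  simp only [Set.mem_Iio] at hi
  omega

theorem arc_inj (hk : 0 < k) (hkn : k < n) (hln : l < n)
    (h : arc a k = arc b l) : a = b ∧ k = l := by
  have hkl : k = l := by
    rw [← ncard_arc_of_le a hkn.le, h, ncard_arc_of_le b hln.le]
  refine ⟨?_, hkl⟩
  have ha : a ∈ arc b l := h ▸ ⟨0, hk, by simp⟩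
  refine (sub_one_mem_arc_or_eq ha).resolve_left fun ha' => ?_
  exact sub_one_notMem_arc a hkn (h ▸ ha')

theorem compl_arc [NeZero n] (a : ZMod n) (hk : k ≤ n) :
    (arc a k)ᶜ = arc (a + (k : ZMod n)) (n - k) := by
  refine (Set.eq_of_subset_of_ncard_le ?_ ?_).symm
  · rintro _ ⟨j, hj, rfl⟩ ⟨i, hi, h⟩
    rw [Set.mem_Iio] at hi hj
    have : k + j = i := natCast_injOn_Iio (show k + j < n by omega) (hi.trans_le hk)
      (by push_cast; linear_combination -h)
    omega
  · rw [Set.ncard_compl, ncard_arc_of_le a hk, ncard_arc_of_le _ (Nat.sub_le n k), Nat.card_zmod]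

theorem exists_arc_subset_add_notMem [NeZero n] {s : Set (ZMod n)} (a : ZMod n) (hb : b ∉ s) :
    ∃ k, arc a k ⊆ s ∧ a + k ∉ s := by
  classical
  have h : ∃ k : ℕ, a + k ∉ s := ⟨(b - a).val, by rwa [natCast_zmod_val, add_sub_cancel]⟩
  refine ⟨Nat.find h, ?_, Nat.find_spec h⟩
  rintro _ ⟨i, hi, rfl⟩
  exact not_not.mp (Nat.find_min h hi)

theorem IsArc.compl [NeZero n] {I : Set (ZMod n)} (h : IsArc I) : IsArc Iᶜ := by
  obtain ⟨a, k, rfl⟩ := h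
  rcases le_total k n with hk | hk
  · exact ⟨_, _, compl_arc a hk⟩
  · exact ⟨0, 0, by rw [arc_eq_univ a hk, Set.compl_univ, arc_zero]⟩

theorem isArc_compl_iff [NeZero n] {I : Set (ZMod n)} : IsArc Iᶜ ↔ IsArc I :=
  ⟨fun h => compl_compl I ▸ h.compl, IsArc.compl⟩

theorem ncard_setOf_isArc_ncard_mem_Icc [NeZero n] {l m : ℕ} (hl : 0 < l) (hm : m < n) :
    {I : Set (ZMod n) | IsArc I ∧ I.ncard ∈ Finset.Icc l m}.ncard = n * (m + 1 - l) := by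
  have himage : {I : Set (ZMod n) | IsArc I ∧ I.ncard ∈ Finset.Icc l m} =
      (fun p : ZMod n × ℕ => arc p.1 p.2) '' (Set.univ ×ˢ Set.Icc l m) := by
    ext I
    constructor
    · rintro ⟨⟨a, k, rfl⟩, hI⟩
      rw [ncard_arc, Finset.mem_Icc] at hI
      exact ⟨(a, k), ⟨Set.mem_univ a, by rw [Set.mem_Icc]; omega⟩, rfl⟩
    · rintro ⟨⟨a, k⟩, ⟨-, hk⟩, rfl⟩
      rw [Set.mem_Icc] at hk
      exact ⟨⟨a, k, rfl⟩, by rw [ncard_arc, Finset.mem_Icc]; omega⟩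
  rw [himage, Set.InjOn.ncard_image, Set.ncard_prod, Set.ncard_univ, Nat.card_zmod,
    Set.ncard_Icc_nat]
  rintro ⟨a, k⟩ ⟨-, hk⟩ ⟨b, k'⟩ ⟨-, hk'⟩ h
  rw [Set.mem_Icc] at hk hk'
  obtain ⟨rfl, rfl⟩ := arc_inj (by omega) (by omega) (by omega) h
  rfl

theorem ncard_setOf_ncard_mem_Icc_not_isArc [NeZero n] {l m : ℕ} (hl : 0 < l) (hm : m < n) :
    {I : Set (ZMod n) | I.ncard ∈ Finset.Icc l m ∧ ¬IsArc I}.ncard =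
      ∑ k ∈ Finset.Icc l m, n.choose k - n * (m + 1 - l) := by
  have hsplit : {I : Set (ZMod n) | I.ncard ∈ Finset.Icc l m ∧ ¬IsArc I} =
      {I | I.ncard ∈ Finset.Icc l m} \ {I | IsArc I ∧ I.ncard ∈ Finset.Icc l m} := by
    ext I
    simp only [Set.mem_ofPred_eq, Set.mem_sdiff, not_and]
    tauto
  rw [hsplit, Set.ncard_sdiff fun I hI => hI.2, Set.ncard_setOf_ncard_mem, ZMod.card,
    ncard_setOf_isArc_ncard_mem_Icc hl hm]

end ZMod

namespace cycleGraph

open ZMod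

variable {n : ℕ}

theorem adj_iff {x y : ZMod n} : (cycleGraph n).Adj x y ↔ x ≠ y ∧ (y = x + 1 ∨ x = y + 1) :=
  SimpleGraph.fromRel_adj _ x y

theorem reachable_induce_add_one {I : Set (ZMod n)} {x : ZMod n} (hx : x ∈ I)
    (hx' : x + 1 ∈ I) :
    ((cycleGraph n).induce I).Reachable ⟨x, hx⟩ ⟨x + 1, hx'⟩ := by
  by_cases h : x = x + 1
  · simp only [← h, SimpleGraph.Reachable.refl]
  · exact SimpleGraph.Adj.reachable (adj_iff.mpr ⟨h, Or.inl rfl⟩)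

theorem preconnected_induce_arc (a : ZMod n) (k : ℕ) :
    ((cycleGraph n).induce (arc a k)).Preconnected := by
  rintro ⟨_, i, hi, rfl⟩ ⟨_, j, hj, rfl⟩
  have ha : a ∈ arc a k := ⟨0, lt_of_le_of_lt (Nat.zero_le i) hi, by simp⟩
  have hreach : ∀ j (hj : j < k),
      ((cycleGraph n).induce (arc a k)).Reachable ⟨a, ha⟩ ⟨a + j, j, hj, rfl⟩ := by
    intro j
    induction j with
    | zero => intro _; simp only [Nat.cast_zero, add_zero, SimpleGraph.Reachable.refl]
    | succ j ih =>
      intro hj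
      have hmem : a + j + 1 ∈ arc a k := ⟨j + 1, hj, by push_cast; ring⟩
      convert (ih (by omega)).trans (reachable_induce_add_one _ hmem) using 3
      exact Subtype.ext (by push_cast; ring)
  exact (hreach i hi).symm.trans (hreach j hj)

theorem isArc_of_preconnected_induce [NeZero n] {I : Set (ZMod n)}
    (hI : ((cycleGraph n).induce I).Preconnected) : IsArc I := by
  rcases I.eq_empty_or_nonempty with rfl | ⟨y, hy⟩
  · exact ⟨0, 0, (arc_zero 0).symm⟩
  by_cases huniv : I = Set.univ
  · exact ⟨0, n, huniv.trans (arc_eq_univ 0 le_rfl).symm⟩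
  obtain ⟨c, hc⟩ := (Set.ne_univ_iff_exists_notMem I).mp huniv
  obtain ⟨j, hjc, hxI⟩ := exists_arc_subset_add_notMem (s := Iᶜ) c (not_not.mpr hy)
  rw [Set.notMem_compl_iff] at hxI
  set x := c + (j : ZMod n)
  have hx : x - 1 ∉ I := by
    obtain ⟨j, rfl⟩ : ∃ j', j = j' + 1 :=
      Nat.exists_eq_succ_of_ne_zero fun h => hc (by simpa [x, h] using hxI)
    exact hjc ⟨j, Nat.lt_succ_self j, by simp only [x]; push_cast; ring⟩
  obtain ⟨k, hkI, hk⟩ := exists_arc_subset_add_notMem x hc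
  refine ⟨x, k, subset_antisymm (fun z hz => ?_) hkI⟩
  have hxk : x ∈ arc x k :=
    ⟨0, Nat.pos_of_ne_zero fun h => hk (by simpa [h] using hxI), by simp⟩
  have hclosed : ∀ ⦃u v : I⦄, ((cycleGraph n).induce I).Adj u v →
      (u : ZMod n) ∈ arc x k → (v : ZMod n) ∈ arc x k := by
    rintro ⟨u, hu⟩ ⟨v, hv⟩ huv hux
    rcases (adj_iff.mp huv).2 with rfl | rfl
    · exact (add_one_mem_arc_or_eq hux).resolve_right fun h => hk (h ▸ hv)
    · have hvx := (sub_one_mem_arc_or_eq hux).resolve_right fun h => hx (by simpa [← h] using hv)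
      simpa using hvx
  exact (hI ⟨x, hxI⟩ ⟨z, hz⟩).mem_of_forall_adj_mem
    (s := {v : I | (v : ZMod n) ∈ arc x k}) hclosed hxk

theorem preconnected_induce_iff_isArc [NeZero n] {I : Set (ZMod n)} :
    ((cycleGraph n).induce I).Preconnected ↔ IsArc I := by
  refine ⟨isArc_of_preconnected_induce, ?_⟩
  rintro ⟨a, k, rfl⟩
  exact preconnected_induce_arc a k

theorem two_le_card_connectedComponent_induce_iff [NeZero n] (I : Set (ZMod n)) :
    2 ≤ Nat.card ((cycleGraph n).induce I).ConnectedComponent ↔ ¬IsArc I := by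
  rw [← not_lt, Nat.lt_succ_iff, Finite.card_le_one_iff_subsingleton,
    ← SimpleGraph.preconnected_iff_subsingleton_connectedComponent, preconnected_induce_iff_isArc]

end cycleGraph

theorem stmt2 (n : ℕ) (hn : 4 ≤ n) :
    Set.ncard {C : Set (Set (ZMod n)) | ∃ I : Set (ZMod n),
        2 ≤ I.ncard ∧ I.ncard ≤ n - 2 ∧
        2 ≤ Nat.card ((cycleGraph n).induce I).ConnectedComponent ∧
        C = {I, Iᶜ}} = 2 ^ (n - 1) - n * (n - 1) / 2 - 1 := by
  have : NeZero n := ⟨by omega⟩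
  set S := {I : Set (ZMod n) | I.ncard ∈ Finset.Icc 2 (n - 2) ∧ ¬ZMod.IsArc I}
  have hpairs : {C : Set (Set (ZMod n)) | ∃ I : Set (ZMod n),
        2 ≤ I.ncard ∧ I.ncard ≤ n - 2 ∧
        2 ≤ Nat.card ((cycleGraph n).induce I).ConnectedComponent ∧
        C = {I, Iᶜ}} = (fun I => {I, Iᶜ}) '' S := by
    ext C
    simp only [S, Set.mem_ofPred_eq, Set.mem_image, Finset.mem_Icc,
      cycleGraph.two_le_card_connectedComponent_induce_iff, and_assoc, eq_comm]
  have hcompl : ∀ I ∈ S, Iᶜ ∈ S := by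
    rintro I ⟨hI, hIarc⟩
    rw [Finset.mem_Icc] at hI
    refine ⟨?_, ZMod.isArc_compl_iff.not.mpr hIarc⟩
    rw [Finset.mem_Icc, Set.ncard_compl, Nat.card_zmod]
    omega
  have hS : S.ncard = 2 ^ n - 2 * n - 2 - n * (n - 3) := by
    rw [ZMod.ncard_setOf_ncard_mem_Icc_not_isArc (by norm_num) (by omega),
      Nat.sum_Icc_choose_eq, show n - 2 + 1 - 2 = n - 3 by omega]
  have hpairs_card := Set.two_mul_ncard_image_pair_compl hcompl
  have hpow : 2 ^ n = 2 * 2 ^ (n - 1) := by rw [← pow_succ']; congr 1; omega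
  have hsq : n * (n - 1) = n * (n - 3) + 2 * n := by
    rw [show n - 1 = n - 3 + 2 by omega, Nat.mul_add]; ring
  have heven : n * (n - 1) / 2 * 2 = n * (n - 1) :=
    Nat.div_two_mul_two_of_even (Nat.even_mul_pred_self n)
  rw [hpairs]
  omega
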